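/- Let 2 < τ < 3 and define Φ₂(t₁,t₂) = t₁ t₂^{τ-1} ((τ-1)/((3-τ)(τ-2)) − t₁^{τ-2}/(τ-2) − ((τ-1)/(3-τ)) t₂^{3-τ}) for t₁, t₂ ∈ [0,1]. Then Φ₂(0,0) = 0, Φ₂(1,1) = 1, and Φ₂ is nondecreasing in each of t₁ and t₂ on [0,1]². -/

import Mathlib

/-! In each variable separately, Φ₂ on `[0, 1]` has the shape `a y ^ q - b y ^ r` with
`0 < q ≤ r` (`q = 1, r = τ - 1` in `t₁`; `q = τ - 1, r = 2` in `t₂`, using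
`y ^ (τ - 1) y ^ (3 - τ) = y ^ 2`). Its derivative `q a y ^ (q - 1) - r b y ^ (r - 1)` is
nonnegative once `r b ≤ q a`, because `y ^ (r - 1) ≤ y ^ (q - 1)` on `(0, 1]`. The coefficient
inequality comes from the partial fractions
`(τ - 1) / ((3 - τ)(τ - 2)) = (τ - 1) / (3 - τ) + (τ - 1) / (τ - 2)` and `t ^ s ≤ 1` on `[0, 1]`. -/

open Real Set

theorem monotoneOn_mul_rpow_sub_mul_rpow {a b q r : ℝ} (hq : 0 < q) (hqr : q ≤ r) (hb : 0 ≤ b)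
    (hab : r * b ≤ q * a) : MonotoneOn (fun y : ℝ => a * y ^ q - b * y ^ r) (Icc 0 1) := by
  have hr : 0 < r := hq.trans_le hqr
  refine monotoneOn_of_hasDerivWithinAt_nonneg (convex_Icc 0 1)
    (f' := fun y => a * (q * y ^ (q - 1)) - b * (r * y ^ (r - 1))) ?_ ?_ ?_
  · refine ContinuousOn.sub (continuousOn_const.mul ?_) (continuousOn_const.mul ?_) <;>
      exact continuousOn_id.rpow_const fun _ _ => Or.inr (by positivity)
  · rw [interior_Icc]
    intro y hy
    exact (((hasDerivAt_rpow_const (Or.inl hy.1.ne')).const_mul a).sub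
      ((hasDerivAt_rpow_const (Or.inl hy.1.ne')).const_mul b)).hasDerivWithinAt
  · rw [interior_Icc]
    intro y ⟨hy0, hy1⟩
    have hpow : y ^ (r - 1) ≤ y ^ (q - 1) :=
      rpow_le_rpow_of_exponent_ge hy0 hy1.le (by linarith)
    refine sub_nonneg.mpr ?_
    calc b * (r * y ^ (r - 1)) = (r * b) * y ^ (r - 1) := by ring
      _ ≤ (q * a) * y ^ (q - 1) :=
        mul_le_mul hab hpow (rpow_nonneg hy0.le _) (hab.trans' (by positivity))
      _ = a * (q * y ^ (q - 1)) := by ring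

noncomputable def phiTwo (τ t₁ t₂ : ℝ) : ℝ :=
  t₁ * t₂ ^ (τ - 1) *
    ((τ - 1) / ((3 - τ) * (τ - 2)) - t₁ ^ (τ - 2) / (τ - 2) - (τ - 1) / (3 - τ) * t₂ ^ (3 - τ))

section

variable {τ : ℝ} (hτ2 : 2 < τ) (hτ3 : τ < 3)
include hτ2 hτ3

theorem phiTwo_coeff_eq :
    (τ - 1) / ((3 - τ) * (τ - 2)) = (τ - 1) / (3 - τ) + (τ - 1) / (τ - 2) := by
  have : τ - 2 ≠ 0 := by linarith
  have : 3 - τ ≠ 0 := by linarith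
  field_simp
  ring

theorem phiTwo_one_one : phiTwo τ 1 1 = 1 := by
  have : τ - 2 ≠ 0 := by linarith
  have : 3 - τ ≠ 0 := by linarith
  simp only [phiTwo, one_rpow]
  field_simp
  ring

theorem monotoneOn_phiTwo_left {t₂ : ℝ} (ht₂ : t₂ ∈ Icc (0 : ℝ) 1) :
    MonotoneOn (fun t₁ => phiTwo τ t₁ t₂) (Icc 0 1) := by
  have hslope : (τ - 1) * (t₂ ^ (τ - 1) / (τ - 2)) ≤ 1 * (t₂ ^ (τ - 1) *
      ((τ - 1) / ((3 - τ) * (τ - 2)) - (τ - 1) / (3 - τ) * t₂ ^ (3 - τ))) := by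
    have hB : 0 ≤ (τ - 1) / (3 - τ) := div_nonneg (by linarith) (by linarith)
    have hpow : t₂ ^ (3 - τ) ≤ 1 := rpow_le_one ht₂.1 ht₂.2 (by linarith)
    calc (τ - 1) * (t₂ ^ (τ - 1) / (τ - 2)) = t₂ ^ (τ - 1) * ((τ - 1) / (τ - 2)) := by ring
      _ ≤ t₂ ^ (τ - 1) * ((τ - 1) / (3 - τ) + (τ - 1) / (τ - 2) -
          (τ - 1) / (3 - τ) * t₂ ^ (3 - τ)) :=
        mul_le_mul_of_nonneg_left (by nlinarith) (rpow_nonneg ht₂.1 _)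
      _ = _ := by rw [phiTwo_coeff_eq hτ2 hτ3]; ring
  refine (monotoneOn_mul_rpow_sub_mul_rpow one_pos (by linarith)
    (div_nonneg (rpow_nonneg ht₂.1 _) (by linarith)) hslope).congr fun x hx => ?_
  have hx : x ^ (τ - 1) = x * x ^ (τ - 2) := by
    rw [← rpow_one_add' hx.1 (by linarith)]; ring_nf
  simp only [phiTwo, rpow_one, hx]
  ring

theorem monotoneOn_phiTwo_right {t₁ : ℝ} (ht₁ : t₁ ∈ Icc (0 : ℝ) 1) :
    MonotoneOn (fun t₂ => phiTwo τ t₁ t₂) (Icc 0 1) := by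
  have hslope : 2 * (t₁ * ((τ - 1) / (3 - τ))) ≤
      (τ - 1) * (t₁ * ((τ - 1) / ((3 - τ) * (τ - 2)) - t₁ ^ (τ - 2) / (τ - 2))) := by
    have hpow : t₁ ^ (τ - 2) / (τ - 2) ≤ 1 / (τ - 2) := by
      gcongr
      exact rpow_le_one ht₁.1 ht₁.2 (by linarith)
    calc 2 * (t₁ * ((τ - 1) / (3 - τ)))
        = (τ - 1) * (t₁ * ((τ - 1) / ((3 - τ) * (τ - 2)) - 1 / (τ - 2))) := by
          have : τ - 2 ≠ 0 := by linarith
          have : 3 - τ ≠ 0 := by linarith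
          field_simp
          ring
      _ ≤ (τ - 1) * (t₁ * ((τ - 1) / ((3 - τ) * (τ - 2)) - t₁ ^ (τ - 2) / (τ - 2))) := by
        gcongr
        · linarith
        · exact ht₁.1
  refine (monotoneOn_mul_rpow_sub_mul_rpow (q := τ - 1) (r := 2) (by linarith) (by linarith)
    (mul_nonneg ht₁.1 (div_nonneg (by linarith) (by linarith))) hslope).congr fun y hy => ?_
  have hy : y ^ (τ - 1) * y ^ (3 - τ) = y ^ (2 : ℝ) := by
    rw [← rpow_add' hy.1 (by norm_num)]; ring_nf
  simp only [phiTwo, ← hy]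
  ring

end

theorem Phi_two_properties (τ : ℝ) (hτ1 : 2 < τ) (hτ2 : τ < 3)
    (Φ : ℝ → ℝ → ℝ)
    (hΦ : ∀ t₁ t₂, Φ t₁ t₂ = t₁ * t₂ ^ (τ - 1) *
      ((τ - 1) / ((3 - τ) * (τ - 2)) - t₁ ^ (τ - 2) / (τ - 2) - (τ - 1) / (3 - τ) * t₂ ^ (3 - τ))) :
    Φ 0 0 = 0 ∧ Φ 1 1 = 1 ∧
      (∀ t₂ ∈ Set.Icc (0:ℝ) 1, MonotoneOn (fun t₁ => Φ t₁ t₂) (Set.Icc 0 1)) ∧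
      (∀ t₁ ∈ Set.Icc (0:ℝ) 1, MonotoneOn (fun t₂ => Φ t₁ t₂) (Set.Icc 0 1)) := by
  obtain rfl : Φ = phiTwo τ := funext₂ hΦ
  exact ⟨by simp [phiTwo], phiTwo_one_one hτ1 hτ2, fun _ ht₂ => monotoneOn_phiTwo_left hτ1 hτ2 ht₂,
    fun _ ht₁ => monotoneOn_phiTwo_right hτ1 hτ2 ht₁⟩
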